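/- Let G be a graph on a finite vertex set and perform t independent tests, each including every node independently with probability 1/√2, with each test positive iff some edge of G is covered. Classify G as having 'a single edge' iff the fraction of positive tests among the t tests lies in the open interval (0, 0.573). Then the probability of misclassification (declaring 'a single edge' when G has 0 or ≥ 2 edges, or failing to declare it when G has exactly 1 edge) is at most 2·e^{−2t·(0.073)²}. -/
import Mathlib


open scoped BigOperators Classical
open Finset Filter

noncomputable section

/-- The set of all potential edges: unordered pairs of distinct nodes of `Fin n`. -/
def allPairs (n : ℕ) : Finset (Sym2 (Fin n)) :=
  Finset.univ.filter fun e => ¬ e.IsDiag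

/-- Both endpoints of the pair `e` lie in the test `L`. -/
def pairIn {n : ℕ} (e : Sym2 (Fin n)) (L : Finset (Fin n)) : Prop :=
  ∀ v ∈ e, v ∈ L

/-- The test `L` covers some edge of the edge set `E` (positive outcome `Y = 1`). -/
def covers {n : ℕ} (E : Finset (Sym2 (Fin n))) (L : Finset (Fin n)) : Prop :=
  ∃ e ∈ E, pairIn e L

/-- ER(n,q) probability weight of a given edge set `E`. -/
def erWeight (n : ℕ) (q : ℝ) (E : Finset (Sym2 (Fin n))) : ℝ :=
  q ^ E.card * (1 - q) ^ ((allPairs n).card - E.card)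

/-- Probability of an event under the Erdős–Rényi random graph ER(n,q). -/
def erProb (n : ℕ) (q : ℝ) (A : Finset (Sym2 (Fin n)) → Prop) : ℝ :=
  ∑ E ∈ (allPairs n).powerset, if A E then erWeight n q E else 0

/-- Bernoulli(p) probability weight of a single test `L ⊆ {1,…,n}`. -/
def testWeight (n : ℕ) (p : ℝ) (L : Finset (Fin n)) : ℝ :=
  p ^ L.card * (1 - p) ^ (n - L.card)

/-- Probability of an event for a single Bernoulli(p) test. -/
def bernProb (n : ℕ) (p : ℝ) (A : Finset (Fin n) → Prop) : ℝ :=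
  ∑ L : Finset (Fin n), if A L then testWeight n p L else 0

/-- Probability weight of `t` i.i.d. Bernoulli(p) tests. -/
def testsWeight (n t : ℕ) (p : ℝ) (Ls : Fin t → Finset (Fin n)) : ℝ :=
  ∏ i, testWeight n p (Ls i)

/-- Probability of an event for `t` i.i.d. Bernoulli(p) tests. -/
def bernTestsProb (n t : ℕ) (p : ℝ) (A : (Fin t → Finset (Fin n)) → Prop) : ℝ :=
  ∑ Ls : Fin t → Finset (Fin n), if A Ls then testsWeight n t p Ls else 0

/-- Joint probability over an ER(n,q) graph and `t` i.i.d. Bernoulli(p) tests. -/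
def erTestsProb (n t : ℕ) (q p : ℝ)
    (A : Finset (Sym2 (Fin n)) → (Fin t → Finset (Fin n)) → Prop) : ℝ :=
  ∑ E ∈ (allPairs n).powerset, ∑ Ls : Fin t → Finset (Fin n),
    if A E Ls then erWeight n q E * testsWeight n t p Ls else 0

/-- Degree of node `v` in the edge set `E`. -/
def degOf {n : ℕ} (E : Finset (Sym2 (Fin n))) (v : Fin n) : ℕ :=
  (E.filter fun e => v ∈ e).card

/-- Maximum degree of the edge set `E`. -/
def maxDeg {n : ℕ} (E : Finset (Sym2 (Fin n))) : ℕ :=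
  Finset.univ.sup (degOf E)

/-- Average number of edges of ER(n, q n): `k̄ = q·C(n,2)`. -/
def kbar (q : ℕ → ℝ) (n : ℕ) : ℝ := q n * (n.choose 2 : ℝ)

/-- Two pairs are vertex-disjoint. -/
def sym2Disjoint {n : ℕ} (e e' : Sym2 (Fin n)) : Prop := ∀ v, v ∈ e → v ∉ e'

variable {n : ℕ} {p : ℝ}

lemma testWeight_nonneg (h0 : 0 ≤ p) (h1 : p ≤ 1) (L : Finset (Fin n)) :
    0 ≤ testWeight n p L :=
  mul_nonneg (pow_nonneg h0 _) (pow_nonneg (by linarith) _)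

lemma aux_sum (s : Finset (Fin n)) :
    ∑ M ∈ s.powerset, p ^ M.card * (1 - p) ^ (s.card - M.card) = 1 := by
  have h := Finset.prod_add (fun _ : Fin n => p) (fun _ : Fin n => (1 - p)) s
  have h2 : ∀ M ∈ s.powerset, (∏ _i ∈ M, p) * ∏ _i ∈ s \ M, (1 - p)
      = p ^ M.card * (1 - p) ^ (s.card - M.card) := by
    intro M hM
    rw [Finset.prod_const, Finset.prod_const, Finset.card_sdiff_of_subset (Finset.mem_powerset.mp hM)]
  rw [Finset.sum_congr rfl h2] at h
  rw [← h, Finset.prod_congr rfl (fun i _ => show p + (1 - p) = 1 by ring), Finset.prod_const,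
    one_pow]

lemma sum_testWeight : ∑ L : Finset (Fin n), testWeight n p L = 1 := by
  have := aux_sum (p := p) (Finset.univ : Finset (Fin n))
  rw [Finset.powerset_univ] at this
  rw [← this]
  exact Finset.sum_congr rfl fun L _ => by simp [testWeight, Finset.card_univ]

lemma bernProb_subset (S : Finset (Fin n)) :
    bernProb n p (fun L => S ⊆ L) = p ^ S.card := by
  classical
  have step1 : bernProb n p (fun L => S ⊆ L)
      = ∑ L ∈ Finset.univ.filter (fun L => S ⊆ L), testWeight n p L := by
    rw [Finset.sum_filter, bernProb]
    exact Finset.sum_congr rfl fun L _ => by by_cases h : S ⊆ L <;> simp [h]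
  rw [step1]
  rw [Finset.sum_nbij' (i := fun L => L \ S) (j := fun M => S ∪ M) (t := Sᶜ.powerset)
    (g := fun M => testWeight n p (S ∪ M))
    (by intro L hL; simp only [Finset.mem_filter] at hL
        simp only [Finset.mem_powerset]
        intro x hx; simp only [Finset.mem_sdiff] at hx; simp [Finset.mem_compl, hx.2])
    (by intro M hM; simp only [Finset.mem_filter, Finset.mem_univ, true_and]
        exact Finset.subset_union_left)
    (by intro L hL; simp only [Finset.mem_filter] at hL
        exact Finset.union_sdiff_of_subset hL.2)
    (by intro M hM; simp only [Finset.mem_powerset] at hM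
        show (S ∪ M) \ S = M
        rw [Finset.union_sdiff_cancel_left]
        rw [Finset.disjoint_left]
        intro x hxS hxM
        exact absurd (hM hxM) (by simp [Finset.mem_compl, hxS]))
    (by intro L hL; simp only [Finset.mem_filter] at hL
        show testWeight n p L = testWeight n p (S ∪ L \ S)
        rw [Finset.union_sdiff_of_subset hL.2])]
  have hcompl : Sᶜ.card = n - S.card := by
    rw [Finset.card_compl, Fintype.card_fin]
  have step2 : ∀ M ∈ Sᶜ.powerset, testWeight n p (S ∪ M)
      = p ^ S.card * (p ^ M.card * (1 - p) ^ (Sᶜ.card - M.card)) := by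
    intro M hM
    rw [Finset.mem_powerset] at hM
    have hdisj : Disjoint S M := by
      rw [Finset.disjoint_left]; intro x hxS hxM
      exact absurd (hM hxM) (by simp [Finset.mem_compl, hxS])
    have hcards : S.card ≤ n := by
      simpa [Finset.card_univ] using Finset.card_le_card (Finset.subset_univ S)
    have hMc : M.card ≤ Sᶜ.card := Finset.card_le_card hM
    rw [testWeight, Finset.card_union_of_disjoint hdisj, pow_add]
    rw [show n - (S.card + M.card) = Sᶜ.card - M.card by omega]
    ring
  rw [Finset.sum_congr rfl step2, ← Finset.mul_sum, aux_sum, mul_one]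
lemma bernProb_congr {A B : Finset (Fin n) → Prop} (h : ∀ L, A L ↔ B L) :
    bernProb n p A = bernProb n p B :=
  Finset.sum_congr rfl fun L _ => by by_cases hA : A L <;> simp [hA, (h L).symm, h L]

lemma bernProb_mono (h0 : 0 ≤ p) (h1 : p ≤ 1) {A B : Finset (Fin n) → Prop}
    (h : ∀ L, A L → B L) : bernProb n p A ≤ bernProb n p B := by
  apply Finset.sum_le_sum
  intro L _
  by_cases hA : A L
  · simp [hA, h L hA]
  · simp only [hA, if_false]
    by_cases hB : B L <;> simp [hB, testWeight_nonneg h0 h1]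

lemma bernProb_nonneg (h0 : 0 ≤ p) (h1 : p ≤ 1) {A : Finset (Fin n) → Prop} :
    0 ≤ bernProb n p A :=
  Finset.sum_nonneg fun L _ => by
    by_cases hA : A L <;> simp [hA, testWeight_nonneg h0 h1]

lemma bernProb_le_one (h0 : 0 ≤ p) (h1 : p ≤ 1) {A : Finset (Fin n) → Prop} :
    bernProb n p A ≤ 1 := by
  calc bernProb n p A ≤ ∑ L : Finset (Fin n), testWeight n p L := by
        apply Finset.sum_le_sum
        intro L _
        by_cases hA : A L <;> simp [hA, testWeight_nonneg h0 h1]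
    _ = 1 := sum_testWeight

lemma bernProb_union (A B : Finset (Fin n) → Prop) :
    bernProb n p (fun L => A L ∨ B L)
      = bernProb n p A + bernProb n p B - bernProb n p (fun L => A L ∧ B L) := by
  unfold bernProb
  rw [← Finset.sum_add_distrib, ← Finset.sum_sub_distrib]
  apply Finset.sum_congr rfl
  intro L _
  by_cases hA : A L <;> by_cases hB : B L <;> simp [hA, hB]

lemma testsWeight_nonneg (h0 : 0 ≤ p) (h1 : p ≤ 1) {t : ℕ} (Ls : Fin t → Finset (Fin n)) :
    0 ≤ testsWeight n t p Ls :=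
  Finset.prod_nonneg fun i _ => testWeight_nonneg h0 h1 _

lemma mgf {t : ℕ} (C : Finset (Fin n) → Prop) (r : ℝ) :
    ∑ Ls : Fin t → Finset (Fin n),
        testsWeight n t p Ls * r ^ (Finset.univ.filter fun i => C (Ls i)).card
      = (1 - bernProb n p C + bernProb n p C * r) ^ t := by
  classical
  have key : ∀ Ls : Fin t → Finset (Fin n),
      testsWeight n t p Ls * r ^ (Finset.univ.filter fun i => C (Ls i)).card
        = ∏ i, (testWeight n p (Ls i) * if C (Ls i) then r else 1) := by
    intro Ls
    rw [Finset.prod_mul_distrib]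
    unfold testsWeight
    congr 1
    rw [Finset.prod_ite, Finset.prod_const, Finset.prod_const, one_pow, mul_one]
  rw [Finset.sum_congr rfl fun Ls _ => key Ls]
  have inner : ∑ L : Finset (Fin n), (testWeight n p L * if C L then r else 1)
      = 1 - bernProb n p C + bernProb n p C * r := by
    have e1 : ∀ L : Finset (Fin n), (testWeight n p L * if C L then r else 1)
        = (testWeight n p L - (if C L then testWeight n p L else 0))
          + (if C L then testWeight n p L else 0) * r := by
      intro L; by_cases hC : C L <;> simp [hC] <;> ring
    rw [Finset.sum_congr rfl fun L _ => e1 L, Finset.sum_add_distrib,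
      Finset.sum_sub_distrib, ← Finset.sum_mul, sum_testWeight]
    rfl
  have hps := Finset.prod_univ_sum (fun _ : Fin t => (Finset.univ : Finset (Finset (Fin n))))
    (fun _ L => testWeight n p L * if C L then r else 1)
  rw [Fintype.piFinset_univ] at hps
  rw [← hps, inner, Finset.prod_const, Finset.card_univ, Fintype.card_fin]

lemma bernTestsProb_mono {t : ℕ} (h0 : 0 ≤ p) (h1 : p ≤ 1)
    {A B : (Fin t → Finset (Fin n)) → Prop} (h : ∀ Ls, A Ls → B Ls) :
    bernTestsProb n t p A ≤ bernTestsProb n t p B := by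
  apply Finset.sum_le_sum
  intro Ls _
  by_cases hA : A Ls
  · simp [hA, h Ls hA]
  · simp only [hA, if_false]
    by_cases hB : B Ls <;> simp [hB, testsWeight_nonneg h0 h1]

lemma bernTestsProb_nonneg {t : ℕ} (h0 : 0 ≤ p) (h1 : p ≤ 1)
    {A : (Fin t → Finset (Fin n)) → Prop} : 0 ≤ bernTestsProb n t p A :=
  Finset.sum_nonneg fun Ls _ => by
    by_cases hA : A Ls <;> simp [hA, testsWeight_nonneg h0 h1]

lemma bernTestsProb_le_one {t : ℕ} (h0 : 0 ≤ p) (h1 : p ≤ 1)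
    {A : (Fin t → Finset (Fin n)) → Prop} : bernTestsProb n t p A ≤ 1 := by
  have hm := mgf (n := n) (p := p) (t := t) (fun _ => False) 1
  have hz : bernProb n p (fun _ : Finset (Fin n) => False) = 0 := by simp [bernProb]
  rw [hz] at hm
  norm_num at hm
  calc bernTestsProb n t p A ≤ ∑ Ls : Fin t → Finset (Fin n), testsWeight n t p Ls := by
        apply Finset.sum_le_sum
        intro Ls _
        by_cases hA : A Ls <;> simp [hA, testsWeight_nonneg h0 h1]
    _ = 1 := hm

lemma bernTestsProb_union {t : ℕ} (h0 : 0 ≤ p) (h1 : p ≤ 1)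
    (A B : (Fin t → Finset (Fin n)) → Prop) :
    bernTestsProb n t p (fun Ls => A Ls ∨ B Ls)
      ≤ bernTestsProb n t p A + bernTestsProb n t p B := by
  unfold bernTestsProb
  rw [← Finset.sum_add_distrib]
  apply Finset.sum_le_sum
  intro Ls _
  by_cases hA : A Ls <;> by_cases hB : B Ls <;>
    simp [hA, hB, testsWeight_nonneg h0 h1]

lemma chernoff {t : ℕ} (h0 : 0 ≤ p) (h1 : p ≤ 1) (C : Finset (Fin n) → Prop)
    (event : (Fin t → Finset (Fin n)) → Prop) (r B : ℝ) (hr : 0 < r) (hB : 0 < B)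
    (h : ∀ Ls, event Ls → B ^ t ≤ r ^ (Finset.univ.filter fun i => C (Ls i)).card) :
    bernTestsProb n t p event ≤ ((1 - bernProb n p C + bernProb n p C * r) / B) ^ t := by
  rw [div_pow, le_div_iff₀ (pow_pos hB t), ← mgf C r]
  unfold bernTestsProb
  rw [Finset.sum_mul]
  apply Finset.sum_le_sum
  intro Ls _
  by_cases hE : event Ls
  · simp only [hE, if_true]
    exact mul_le_mul_of_nonneg_left (h Ls hE) (testsWeight_nonneg h0 h1 Ls)
  · simp only [hE, if_false, zero_mul]
    exact mul_nonneg (testsWeight_nonneg h0 h1 Ls) (pow_nonneg hr.le _)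

lemma sym2_toPair (e : Sym2 (Fin n)) : ∃ u v, e = s(u, v) := by
  induction e using Sym2.ind with
  | _ u v => exact ⟨u, v, rfl⟩

lemma pair_eq_sym2 {u v u' v' : Fin n} (h : ({u, v} : Finset (Fin n)) = {u', v'}) :
    s(u, v) = s(u', v') := by
  have hu' : u' ∈ ({u, v} : Finset (Fin n)) := by rw [h]; simp
  have hv' : v' ∈ ({u, v} : Finset (Fin n)) := by rw [h]; simp
  have hu : u ∈ ({u', v'} : Finset (Fin n)) := by rw [← h]; simp
  have hv : v ∈ ({u', v'} : Finset (Fin n)) := by rw [← h]; simp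
  simp only [Finset.mem_insert, Finset.mem_singleton] at hu hv hu' hv'
  rw [Sym2.eq_iff]
  rcases hu' with rfl | rfl <;> rcases hv' with rfl | rfl <;> tauto

lemma pairIn_iff {u v : Fin n} (L : Finset (Fin n)) :
    pairIn s(u, v) L ↔ ({u, v} : Finset (Fin n)) ⊆ L := by
  rw [Finset.insert_subset_iff, Finset.singleton_subset_iff]
  constructor
  · intro h
    exact ⟨h u (Sym2.mem_mk_left u v), h v (Sym2.mem_mk_right u v)⟩
  · rintro ⟨h1, h2⟩ w hw
    rcases Sym2.mem_iff.mp hw with rfl | rfl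
    · exact h1
    · exact h2

lemma covers_single {u v : Fin n} (L : Finset (Fin n)) :
    covers {s(u, v)} L ↔ ({u, v} : Finset (Fin n)) ⊆ L := by
  unfold covers
  simp only [Finset.mem_singleton, exists_eq_left]
  exact pairIn_iff L

lemma mu_lower (h0 : 0 ≤ p) (h1 : p ≤ 1) (hp2 : p ^ 2 = 1 / 2)
    {E : Finset (Sym2 (Fin n))} (hsimple : ∀ e ∈ E, ¬ e.IsDiag) (hcard : 2 ≤ E.card) :
    1 - p ^ 3 ≤ bernProb n p (covers E) := by
  obtain ⟨e₁, he₁, e₂, he₂, hne⟩ := Finset.one_lt_card.mp (show 1 < E.card by omega)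
  obtain ⟨u₁, v₁, rfl⟩ := sym2_toPair e₁
  obtain ⟨u₂, v₂, rfl⟩ := sym2_toPair e₂
  have hd₁ : u₁ ≠ v₁ := fun h => hsimple _ he₁ (Sym2.mk_isDiag_iff.mpr h)
  set S₁ : Finset (Fin n) := {u₁, v₁} with hS₁
  set S₂ : Finset (Fin n) := {u₂, v₂} with hS₂
  have hSne : S₁ ≠ S₂ := fun h => hne (pair_eq_sym2 h)
  have hd₂ : u₂ ≠ v₂ := fun h => hsimple _ he₂ (Sym2.mk_isDiag_iff.mpr h)
  have hcard₁ : S₁.card = 2 := Finset.card_pair hd₁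
  have hcard₂ : S₂.card = 2 := Finset.card_pair hd₂
  have hc : 3 ≤ (S₁ ∪ S₂).card := by
    by_contra hcon
    push_neg at hcon
    have h1 : S₁ = S₁ ∪ S₂ :=
      Finset.eq_of_subset_of_card_le Finset.subset_union_left (by omega)
    have h2 : S₂ = S₁ ∪ S₂ :=
      Finset.eq_of_subset_of_card_le Finset.subset_union_right
        (by rw [← h1]; omega)
    exact hSne (h1.trans h2.symm)
  have mono : bernProb n p (fun L => S₁ ⊆ L ∨ S₂ ⊆ L) ≤ bernProb n p (covers E) := by
    apply bernProb_mono h0 h1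
    intro L hL
    rcases hL with hL | hL
    · exact ⟨_, he₁, (pairIn_iff L).mpr hL⟩
    · exact ⟨_, he₂, (pairIn_iff L).mpr hL⟩
  have hunion : bernProb n p (fun L => S₁ ⊆ L ∨ S₂ ⊆ L)
      = p ^ 2 + p ^ 2 - p ^ (S₁ ∪ S₂).card := by
    rw [bernProb_union]
    have h12 : bernProb n p (fun L => S₁ ⊆ L ∧ S₂ ⊆ L) = p ^ (S₁ ∪ S₂).card := by
      rw [bernProb_congr (fun L => (Finset.union_subset_iff).symm)]
      exact bernProb_subset _
    rw [h12, bernProb_subset, bernProb_subset, hcard₁, Finset.card_pair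
      (fun h => hsimple _ he₂ (Sym2.mk_isDiag_iff.mpr h))]
  have hple : p ^ (S₁ ∪ S₂).card ≤ p ^ 3 := pow_le_pow_of_le_one h0 h1 hc
  calc 1 - p ^ 3 ≤ 1 - p ^ (S₁ ∪ S₂).card := by linarith
    _ = p ^ 2 + p ^ 2 - p ^ (S₁ ∪ S₂).card := by rw [hp2]; ring
    _ ≤ bernProb n p (covers E) := hunion ▸ mono

lemma exp_bounds8 (x : ℝ) (hx : |x| ≤ 1) :
    |Real.exp x - ∑ m ∈ Finset.range 8, x ^ m / m.factorial| ≤ |x| ^ 8 * (1 / 35840) := by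
  have h := Real.exp_bound hx (n := 8) (by norm_num)
  norm_num [Nat.factorial] at h
  exact h

lemma num_a : Real.exp 0.294 ≤ 1.34178893 := by
  have h := (abs_le.mp (exp_bounds8 0.294 (by rw [abs_le]; norm_num))).2
  rw [abs_of_nonneg (by norm_num)] at h
  norm_num [Finset.sum_range_succ, Nat.factorial] at h
  linarith

lemma num_b : (1.1709366 : ℝ) ≤ Real.exp 0.157804 := by
  have h := (abs_le.mp (exp_bounds8 0.157804 (by rw [abs_le]; norm_num))).1
  rw [abs_of_nonneg (by norm_num)] at h
  norm_num [Finset.sum_range_succ, Nat.factorial] at h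
  linarith

lemma num_e1 : (0.7334469 : ℝ) ≤ Real.exp (-0.31) := by
  have h := (abs_le.mp (exp_bounds8 (-0.31) (by rw [abs_le]; norm_num))).1
  rw [abs_of_nonpos (by norm_num)] at h
  norm_num [Finset.sum_range_succ, Nat.factorial] at h
  linarith

lemma num_e2 : Real.exp (-0.31) ≤ 0.7334470 := by
  have h := (abs_le.mp (exp_bounds8 (-0.31) (by rw [abs_le]; norm_num))).2
  rw [abs_of_nonpos (by norm_num)] at h
  norm_num [Finset.sum_range_succ, Nat.factorial] at h
  linarith

lemma num_f : (0.8283760 : ℝ) ≤ Real.exp (-0.188288) := by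
  have h := (abs_le.mp (exp_bounds8 (-0.188288) (by rw [abs_le]; norm_num))).1
  rw [abs_of_nonpos (by norm_num)] at h
  norm_num [Finset.sum_range_succ, Nat.factorial] at h
  linarith

lemma num_c : Real.exp (-1) ≤ 0.368 := by
  rw [Real.exp_neg]
  have := Real.exp_one_gt_d9
  rw [show (0.368 : ℝ) = 1 / (1 / 0.368) by norm_num, inv_eq_one_div]
  apply div_le_div_of_nonneg_left (by norm_num) (by positivity) (by linarith)

lemma num_d : (0.989342 : ℝ) ≤ Real.exp (-0.010658) := by
  have := Real.add_one_le_exp (-0.010658 : ℝ)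
  linarith

set_option maxHeartbeats 1600000 in
/-- multiplicity test misclassification bound.
Perform `t` independent tests, each including every node independently with probability
`1/√2`.  Declare `G` to have 'a single edge' iff the fraction of positive tests lies in
`(0, 0.573)`.  The probability of misclassification is at most `2·e^{−2t·(0.073)²}`. -/
theorem statement18 (n t : ℕ) (E : Finset (Sym2 (Fin n)))
    (hsimple : ∀ e ∈ E, ¬ e.IsDiag) :
    bernTestsProb n t (Real.sqrt 2)⁻¹ (fun Ls =>
        (E.card = 1 ∧
          ¬ (0 < ((Finset.univ.filter fun i => covers E (Ls i)).card : ℝ) / t ∧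
             ((Finset.univ.filter fun i => covers E (Ls i)).card : ℝ) / t < 0.573)) ∨
        (E.card ≠ 1 ∧
          (0 < ((Finset.univ.filter fun i => covers E (Ls i)).card : ℝ) / t ∧
           ((Finset.univ.filter fun i => covers E (Ls i)).card : ℝ) / t < 0.573)))
      ≤ 2 * Real.exp (-2 * t * (0.073 : ℝ) ^ 2) := by
  classical
  set p : ℝ := (Real.sqrt 2)⁻¹ with hp_def
  have hs2 : Real.sqrt 2 ^ 2 = 2 := Real.sq_sqrt (by norm_num)
  have hs2nn : (0 : ℝ) ≤ Real.sqrt 2 := Real.sqrt_nonneg 2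
  have hs_lb : (1.41421356 : ℝ) ≤ Real.sqrt 2 := by nlinarith
  have hs_ub : Real.sqrt 2 ≤ (1.41421357 : ℝ) := by nlinarith
  have h0 : 0 ≤ p := by positivity
  have hps : p * Real.sqrt 2 = 1 := inv_mul_cancel₀ (by positivity)
  have hmm : (0:ℝ) ≤ p * (Real.sqrt 2 - 1.41421356) :=
    mul_nonneg h0 (by linarith)
  have hp_ub : p ≤ 0.7071068 := by nlinarith
  have h1 : p ≤ 1 := by linarith
  have hp2 : p ^ 2 = 1 / 2 := by
    rw [hp_def, inv_pow, hs2]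
    norm_num
  -- rewrite the RHS
  have hRHS : 2 * Real.exp (-2 * t * (0.073 : ℝ) ^ 2)
      = 2 * Real.exp (-0.010658) ^ t := by
    rw [← Real.exp_nat_mul]
    congr 1
    push_cast
    ring
  rw [hRHS]
  have hc0 : (0 : ℝ) < Real.exp (-0.010658) := Real.exp_pos _
  set kf : (Fin t → Finset (Fin n)) → ℕ :=
    fun Ls => (Finset.univ.filter fun i => covers E (Ls i)).card with hkf
  rcases Nat.eq_zero_or_pos t with ht | ht
  · -- t = 0 : probability is at most 1 ≤ 2
    subst ht
    refine le_trans (bernTestsProb_le_one h0 h1) ?_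
    norm_num
  have ht' : (0 : ℝ) < t := by exact_mod_cast ht
  by_cases hcard : E.card = 1
  · -- exactly one edge
    obtain ⟨e, he⟩ := Finset.card_eq_one.mp hcard
    obtain ⟨u, v, rfl⟩ := sym2_toPair e
    have hd : u ≠ v := fun h =>
      hsimple _ (he ▸ Finset.mem_singleton_self _) (Sym2.mk_isDiag_iff.mpr h)
    have hiff : ∀ L, covers E L ↔ ({u, v} : Finset (Fin n)) ⊆ L := by
      intro L
      rw [he]
      exact covers_single L
    have hμ : bernProb n p (covers E) = 1 / 2 := by
      rw [bernProb_congr hiff, bernProb_subset, Finset.card_pair hd, hp2]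
    -- the misclassification event implies (kf = 0) or (0.573 t ≤ kf)
    have himp : ∀ Ls, ((E.card = 1 ∧
          ¬ (0 < ((Finset.univ.filter fun i => covers E (Ls i)).card : ℝ) / t ∧
             ((Finset.univ.filter fun i => covers E (Ls i)).card : ℝ) / t < 0.573)) ∨
        (E.card ≠ 1 ∧
          (0 < ((Finset.univ.filter fun i => covers E (Ls i)).card : ℝ) / t ∧
           ((Finset.univ.filter fun i => covers E (Ls i)).card : ℝ) / t < 0.573))) →
        (kf Ls = 0 ∨ (0.573 : ℝ) * t ≤ kf Ls) := by
      intro Ls h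
      rcases h with ⟨_, hnot⟩ | ⟨hne, _⟩
      · by_cases hk : kf Ls = 0
        · exact Or.inl hk
        · right
          have hkpos : 0 < ((kf Ls : ℝ)) / t := by
            apply div_pos _ ht'
            exact_mod_cast Nat.pos_of_ne_zero hk
          push_neg at hnot
          have := hnot hkpos
          rw [le_div_iff₀ ht'] at this
          linarith
      · exact absurd hcard hne
    have step1 : bernTestsProb n t p _ ≤
        bernTestsProb n t p (fun Ls => kf Ls = 0 ∨ (0.573 : ℝ) * t ≤ kf Ls) :=
      bernTestsProb_mono h0 h1 himp
    have step2 : bernTestsProb n t p (fun Ls => kf Ls = 0 ∨ (0.573 : ℝ) * t ≤ kf Ls) ≤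
        bernTestsProb n t p (fun Ls => kf Ls = 0)
          + bernTestsProb n t p (fun Ls => (0.573 : ℝ) * t ≤ kf Ls) :=
      bernTestsProb_union h0 h1 _ _
    -- zero-positives bound
    have bndA : bernTestsProb n t p (fun Ls => kf Ls = 0) ≤ Real.exp (-0.010658) ^ t := by
      have hch := chernoff (t := t) h0 h1 (covers E) (fun Ls => kf Ls = 0)
        (Real.exp (-1)) 1 (Real.exp_pos _) one_pos
        (by intro Ls hLs
            rw [show (Finset.univ.filter fun i => covers E (Ls i)).card = kf Ls from rfl, hLs]
            norm_num)
      refine hch.trans ?_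
      apply pow_le_pow_left₀ _ _ t
      · rw [hμ]
        positivity
      · rw [hμ, div_le_iff₀ one_pos]
        have := num_c
        have := num_d
        linarith
    -- large-fraction bound
    have bndB : bernTestsProb n t p (fun Ls => (0.573 : ℝ) * t ≤ kf Ls)
        ≤ Real.exp (-0.010658) ^ t := by
      have hch := chernoff (t := t) h0 h1 (covers E) (fun Ls => (0.573 : ℝ) * t ≤ kf Ls)
        (Real.exp 0.294) (Real.exp 0.168462) (Real.exp_pos _) (Real.exp_pos _)
        (by intro Ls hLs
            rw [show (Finset.univ.filter fun i => covers E (Ls i)).card = kf Ls from rfl]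
            rw [← Real.exp_nat_mul, ← Real.exp_nat_mul, Real.exp_le_exp]
            linarith)
      refine hch.trans ?_
      apply pow_le_pow_left₀ _ _ t
      · rw [hμ]
        positivity
      · rw [hμ, div_le_iff₀ (Real.exp_pos _), ← Real.exp_add]
        norm_num
        have := num_a
        have := num_b
        linarith
    refine le_trans step1 (le_trans step2 ?_)
    calc bernTestsProb n t p (fun Ls => kf Ls = 0)
          + bernTestsProb n t p (fun Ls => (0.573 : ℝ) * t ≤ kf Ls)
        ≤ Real.exp (-0.010658) ^ t + Real.exp (-0.010658) ^ t := add_le_add bndA bndB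
      _ = 2 * Real.exp (-0.010658) ^ t := by ring
  · -- zero or at least two edges
    by_cases hE0 : E = ∅
    · -- no edges: the event never happens
      have hnn : (0:ℝ) ≤ 2 * Real.exp (-0.010658) ^ t := by positivity
      unfold bernTestsProb
      refine le_trans (le_of_eq (Finset.sum_eq_zero ?_)) hnn
      intro Ls _
      rw [if_neg]
      rintro (⟨h1', _⟩ | ⟨_, hpos, _⟩)
      · exact hcard h1'
      · have hnc : ∀ i : Fin t, ¬ covers E (Ls i) := by
          intro i hcov
          obtain ⟨e, heE, _⟩ := hcov
          rw [hE0] at heE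
          exact absurd heE (Finset.notMem_empty e)
        rw [Finset.filter_false_of_mem (fun i _ => hnc i)] at hpos
        norm_num at hpos
    · -- at least two edges
      have hcard2 : 2 ≤ E.card := by
        have := Finset.card_ne_zero_of_mem (Finset.nonempty_of_ne_empty hE0).choose_spec
        omega
      have hμlb : 1 - p ^ 3 ≤ bernProb n p (covers E) := mu_lower h0 h1 hp2 hsimple hcard2
      have hμ1 : bernProb n p (covers E) ≤ 1 := bernProb_le_one h0 h1
      have hμ0 : 0 ≤ bernProb n p (covers E) := bernProb_nonneg h0 h1
      have hp3 : p ^ 3 ≤ 0.3535534 := by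
        have : p ^ 3 = p ^ 2 * p := by ring
        rw [this, hp2]
        linarith
      have hμlb' : (0.6464466 : ℝ) ≤ bernProb n p (covers E) := by linarith
      have himp : ∀ Ls, ((E.card = 1 ∧
            ¬ (0 < ((Finset.univ.filter fun i => covers E (Ls i)).card : ℝ) / t ∧
               ((Finset.univ.filter fun i => covers E (Ls i)).card : ℝ) / t < 0.573)) ∨
          (E.card ≠ 1 ∧
            (0 < ((Finset.univ.filter fun i => covers E (Ls i)).card : ℝ) / t ∧
             ((Finset.univ.filter fun i => covers E (Ls i)).card : ℝ) / t < 0.573))) →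
          ((kf Ls : ℝ) ≤ 0.573 * t) := by
        intro Ls h
        rcases h with ⟨h1', _⟩ | ⟨_, _, hlt⟩
        · exact absurd h1' hcard
        · rw [div_lt_iff₀ ht'] at hlt
          linarith
      have step1 : bernTestsProb n t p _ ≤
          bernTestsProb n t p (fun Ls => (kf Ls : ℝ) ≤ 0.573 * t) :=
        bernTestsProb_mono h0 h1 himp
      have bndC : bernTestsProb n t p (fun Ls => (kf Ls : ℝ) ≤ 0.573 * t)
          ≤ Real.exp (-0.010658) ^ t := by
        have hch := chernoff (t := t) h0 h1 (covers E)
          (fun Ls => (kf Ls : ℝ) ≤ 0.573 * t)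
          (Real.exp (-0.31)) (Real.exp (-0.17763)) (Real.exp_pos _) (Real.exp_pos _)
          (by intro Ls hLs
              rw [show (Finset.univ.filter fun i => covers E (Ls i)).card = kf Ls from rfl]
              rw [← Real.exp_nat_mul, ← Real.exp_nat_mul, Real.exp_le_exp]
              linarith)
        refine hch.trans ?_
        apply pow_le_pow_left₀ _ _ t
        · apply div_nonneg _ (Real.exp_pos _).le
          nlinarith [Real.exp_pos (-0.31 : ℝ)]
        · rw [div_le_iff₀ (Real.exp_pos _), ← Real.exp_add]
          norm_num
          have he1 := num_e1
          have he2 := num_e2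
          have hf := num_f
          nlinarith [mul_nonneg (sub_nonneg.mpr hμlb')
            (by linarith : (0:ℝ) ≤ 1 - Real.exp (-0.31))]
      refine le_trans step1 (le_trans bndC ?_)
      nlinarith [pow_pos hc0 t]

end
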